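/- Assume r satisfies gcd(r, det P) = 1 and ξ ∈ ℂ is a primitive r-th root of unity. For λ, μ ∈ ρ + ℤ^ℓ set S(λ,μ) := ∑_{w ∈ W} det(w)·ξ^{B(μ, w·λ) − B(ρ,ρ)}. Let Λ ⊆ ρ + ℤ^ℓ be a finite set such that for all λ, ν ∈ Λ and all w, w' ∈ W, the condition w·λ − w'·ν ∈ rℤ^ℓ implies λ = ν and w = w'. Then for λ ≠ ν in Λ one has ∑_{k ∈ {0,…,r−1}^ℓ} S(λ, ρ+k)·\overline{S(ν, ρ+k)} = 0, while ∑_{k ∈ {0,…,r−1}^ℓ} |S(λ, ρ+k)|² = |W|·r^ℓ for each λ ∈ Λ; consequently the vectors (S(λ, ρ+k))_{k ∈ {0,…,r−1}^ℓ}, indexed by λ ∈ Λ, are pairwise orthogonal, nonzero, and linearly independent over ℂ. -/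

import Mathlib

def intVecQ {l : ℕ} (x : Fin l → ℤ) : Fin l → ℚ := fun i => (x i : ℚ)

def finVecQ {l r : ℕ} (k : Fin l → Fin r) : Fin l → ℚ := fun i => ((k i : ℕ) : ℚ)

def glDet {l : ℕ} (w : Matrix.GeneralLinearGroup (Fin l) ℤ) : ℤ :=
  Matrix.det (w : Matrix (Fin l) (Fin l) ℤ)

def glAct {l : ℕ} (w : Matrix.GeneralLinearGroup (Fin l) ℤ) (x : Fin l → ℚ) : Fin l → ℚ :=
  Matrix.mulVec ((w : Matrix (Fin l) (Fin l) ℤ).map fun z => (z : ℚ)) x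

/-! Expanding the products, the pairing of the rows of `λ` and `ν` becomes
`∑_{w,w'} det w det w' ∑_k ξ^{B(ρ+k, wλ − w'ν)}`. Here `d = wλ − w'ν ∈ ℤ^ℓ`, and the sum over the
box `k ∈ {0,…,r−1}^ℓ` factors into geometric sums `∑_j ξ^{j (Pd)_i}`, which vanish unless
`Pd ∈ rℤ^ℓ`. As `det P` is prime to `r`, that forces `d ∈ rℤ^ℓ` (multiply by the adjugate), hence
`λ = ν` and `w = w'` by separation. So the Gram matrix of the rows is `|W| r^ℓ` times the identity,
and the rows are linearly independent. -/

theorem zpow_sum₀ {ι G₀ : Type*} [CommGroupWithZero G₀] {a : G₀} (ha : a ≠ 0) (s : Finset ι)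
    (f : ι → ℤ) : a ^ (∑ i ∈ s, f i) = ∏ i ∈ s, a ^ f i := by
  induction s using Finset.cons_induction with
  | empty => simp
  | cons i s hi ih => rw [Finset.sum_cons, Finset.prod_cons, zpow_add₀ ha, ih]

section CharacterSums

variable {K : Type*} [Field K] {r : ℕ} {ξ : K}

theorem IsPrimitiveRoot.sum_fin_zpow_mul_eq_zero (hξ : IsPrimitiveRoot ξ r) {c : ℤ}
    (hc : ¬(r : ℤ) ∣ c) : ∑ j : Fin r, ξ ^ (((j : ℕ) : ℤ) * c) = 0 := by
  have hξc : ξ ^ c ≠ 1 := fun h => hc ((hξ.zpow_eq_one_iff_dvd c).mp h)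
  have hξcr : (ξ ^ c) ^ r = 1 := by
    rw [← zpow_natCast, ← zpow_mul, mul_comm, zpow_mul, zpow_natCast, hξ.pow_eq_one, one_zpow]
  simp_rw [mul_comm _ c, zpow_mul, zpow_natCast]
  rw [Fin.sum_univ_eq_sum_range (fun j => (ξ ^ c) ^ j), geom_sum_eq hξc, hξcr, sub_self,
    zero_div]

theorem IsPrimitiveRoot.sum_pi_fin_zpow_eq_zero {ι : Type*} [Fintype ι] [DecidableEq ι]
    (hξ : IsPrimitiveRoot ξ r) (hr : r ≠ 0) (m : ℤ) {c : ι → ℤ} (hc : ∃ i, ¬(r : ℤ) ∣ c i) :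
    ∑ k : ι → Fin r, ξ ^ (m + ∑ i, ((k i : ℕ) : ℤ) * c i) = 0 := by
  have hξ0 := hξ.ne_zero hr
  obtain ⟨i, hi⟩ := hc
  simp_rw [zpow_add₀ hξ0, zpow_sum₀ hξ0]
  rw [← Finset.mul_sum, ← Fintype.prod_sum (fun i (j : Fin r) => ξ ^ (((j : ℕ) : ℤ) * c i)),
    Finset.prod_eq_zero (Finset.mem_univ i) (hξ.sum_fin_zpow_mul_eq_zero hi), mul_zero]

end CharacterSums

namespace Matrix

theorem dvd_of_forall_dvd_mulVec {R n : Type*} [CommRing R] [Fintype n] [DecidableEq n]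
    (A : Matrix n n R) {a : R} (ha : IsCoprime a A.det) {d : n → R}
    (h : ∀ i, a ∣ (A *ᵥ d) i) (i : n) : a ∣ d i := by
  have hadj : (A.adjugate *ᵥ (A *ᵥ d)) i = A.det * d i := by
    rw [mulVec_mulVec, adjugate_mul, smul_mulVec, one_mulVec, Pi.smul_apply, smul_eq_mul]
  refine ha.dvd_of_dvd_mul_left ?_
  rw [← hadj]
  exact Finset.dvd_sum fun j _ => (h j).mul_left _

end Matrix

theorem glDet_mul_self {l : ℕ} (w : GL (Fin l) ℤ) : glDet w * glDet w = 1 := by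
  rw [glDet, ← Matrix.GeneralLinearGroup.val_det_apply, ← Units.val_mul, Int.units_mul_self,
    Units.val_one]

theorem linearIndependent_of_sum_mul_eq_ite {ι κ K : Type*} [Fintype ι] [DecidableEq ι]
    [Fintype κ] [Field K] (φ : K → K) (v : ι → κ → K) {c : K} (hc : c ≠ 0)
    (h : ∀ i j, ∑ k, v i k * φ (v j k) = if i = j then c else 0) : LinearIndependent K v := by
  rw [Fintype.linearIndependent_iff]
  intro g hg j
  have hpair : ∑ k, (∑ i, g i • v i) k * φ (v j k) = g j * c := by
    simp_rw [Finset.sum_apply, Pi.smul_apply, smul_eq_mul, Finset.sum_mul, mul_assoc]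
    rw [Finset.sum_comm]
    simp_rw [← Finset.mul_sum, h]
    simp
  rw [hg] at hpair
  simpa [hc] using hpair.symm

section Lattice

open Matrix

variable {l : ℕ}

theorem intVecQ_add (x y : Fin l → ℤ) : intVecQ (x + y) = intVecQ x + intVecQ y := by
  ext i; simp [intVecQ]

theorem intVecQ_sub (x y : Fin l → ℤ) : intVecQ (x - y) = intVecQ x - intVecQ y := by
  ext i; simp [intVecQ]

theorem intVecQ_single (i : Fin l) : intVecQ (Pi.single i 1) = Pi.single i 1 := by
  ext j; simp [intVecQ, Pi.single_apply]

theorem map_intCast_mulVec_intVecQ (M : Matrix (Fin l) (Fin l) ℤ) (a : Fin l → ℤ) :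
    M.map (↑) *ᵥ intVecQ a = intVecQ (M *ᵥ a) := by
  ext i; exact (RingHom.map_mulVec (Int.castRingHom ℚ) M a i).symm

theorem glAct_add (w : GL (Fin l) ℤ) (x y : Fin l → ℚ) :
    glAct w (x + y) = glAct w x + glAct w y :=
  Matrix.mulVec_add _ _ _

theorem glAct_intVecQ (w : GL (Fin l) ℤ) (a : Fin l → ℤ) :
    glAct w (intVecQ a) = intVecQ ((w : Matrix (Fin l) (Fin l) ℤ) *ᵥ a) :=
  map_intCast_mulVec_intVecQ _ a

theorem exists_glAct_eq_add_intVecQ {ρ μ : Fin l → ℚ} {w : GL (Fin l) ℤ}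
    (hw : ∃ z, glAct w ρ - ρ = intVecQ z) (hμ : ∃ a, μ = ρ + intVecQ a) :
    ∃ z, glAct w μ = ρ + intVecQ z := by
  obtain ⟨z, hz⟩ := hw
  obtain ⟨a, rfl⟩ := hμ
  refine ⟨z + (w : Matrix (Fin l) (Fin l) ℤ) *ᵥ a, ?_⟩
  rw [glAct_add, glAct_intVecQ, intVecQ_add, ← hz]
  abel

theorem exists_glAct_sub_glAct_eq_intVecQ {ρ μ ν : Fin l → ℚ} {w w' : GL (Fin l) ℤ}
    (hw : ∃ z, glAct w ρ - ρ = intVecQ z) (hw' : ∃ z, glAct w' ρ - ρ = intVecQ z)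
    (hμ : ∃ a, μ = ρ + intVecQ a) (hν : ∃ a, ν = ρ + intVecQ a) :
    ∃ d, glAct w μ - glAct w' ν = intVecQ d := by
  obtain ⟨z, hz⟩ := exists_glAct_eq_add_intVecQ hw hμ
  obtain ⟨z', hz'⟩ := exists_glAct_eq_add_intVecQ hw' hν
  exact ⟨z - z', by rw [hz, hz', intVecQ_sub]; abel⟩

variable (B : (Fin l → ℚ) →ₗ[ℚ] (Fin l → ℚ) →ₗ[ℚ] ℚ)

theorem exists_map_intCast_eq_toMatrix₂'
    (hBint : ∀ x y : Fin l → ℤ, ∃ n : ℤ, (n : ℚ) = B (intVecQ x) (intVecQ y)) :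
    ∃ P : Matrix (Fin l) (Fin l) ℤ, P.map (↑) = LinearMap.toMatrix₂' ℚ B := by
  choose P hP using fun i j => hBint (Pi.single i 1) (Pi.single j 1)
  exact ⟨Matrix.of P, by ext i j; simp [hP, intVecQ_single]⟩

variable {B}

theorem apply_intVecQ_eq_dotProduct {P : Matrix (Fin l) (Fin l) ℤ}
    (hP : P.map (↑) = LinearMap.toMatrix₂' ℚ B) (x : Fin l → ℚ) (d : Fin l → ℤ) :
    B x (intVecQ d) = x ⬝ᵥ intVecQ (P *ᵥ d) := by
  conv_lhs => rw [← Matrix.toLinearMap₂'_toMatrix' (R := ℚ) B]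
  rw [Matrix.toLinearMap₂'_apply', ← hP, map_intCast_mulVec_intVecQ]

theorem sum_zpow_eq_zero_of_not_dvd {K : Type*} [Field K] {r : ℕ} {ξ : K} (hr : r ≠ 0)
    (hξ : IsPrimitiveRoot ξ r) {ρ : Fin l → ℚ}
    (hρ : ∀ y : Fin l → ℤ, ∃ n : ℤ, (n : ℚ) = B ρ (intVecQ y))
    {P : Matrix (Fin l) (Fin l) ℤ} (hP : P.map (↑) = LinearMap.toMatrix₂' ℚ B)
    (hcop : IsCoprime (r : ℤ) P.det) {d : Fin l → ℤ} (hd : ¬∀ i, (r : ℤ) ∣ d i)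
    (e : (Fin l → Fin r) → ℤ) (he : ∀ k, (e k : ℚ) = B (ρ + finVecQ k) (intVecQ d)) :
    ∑ k, ξ ^ e k = 0 := by
  obtain ⟨m, hm⟩ := hρ d
  have hexp : ∀ k, e k = m + ∑ i, ((k i : ℕ) : ℤ) * (P *ᵥ d) i := by
    intro k
    have hek := he k
    rw [map_add, LinearMap.add_apply, ← hm, apply_intVecQ_eq_dotProduct hP] at hek
    have hcast : (e k : ℚ) = ((m + ∑ i, ((k i : ℕ) : ℤ) * (P *ᵥ d) i : ℤ) : ℚ) := by
      rw [hek]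
      push_cast
      rfl
    exact_mod_cast hcast
  simp_rw [hexp]
  exact hξ.sum_pi_fin_zpow_eq_zero hr m
    (not_forall.mp fun h => hd (P.dvd_of_forall_dvd_mulVec hcop h))

end Lattice

theorem sum_mul_conj_sum_signed {W κ : Type*} [Fintype W] [DecidableEq W] [Fintype κ] {ξ : ℂ}
    (hξ : ‖ξ‖ = 1) (ε : W → ℤ) (hε : ∀ w, ε w * ε w = 1) (e f : W → κ → ℤ) (p : Prop)
    [Decidable p] (N : ℂ)
    (h : ∀ w w', ∑ k, ξ ^ (e w k - f w' k) = if p ∧ w = w' then N else 0) :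
    ∑ k, (∑ w, (ε w : ℂ) * ξ ^ e w k) * starRingEnd ℂ (∑ w, (ε w : ℂ) * ξ ^ f w k) =
      if p then Fintype.card W * N else 0 := by
  have hξ0 : ξ ≠ 0 := by rintro rfl; simp at hξ
  have hexpand : ∀ k, (∑ w, (ε w : ℂ) * ξ ^ e w k) * starRingEnd ℂ (∑ w, (ε w : ℂ) * ξ ^ f w k)
      = ∑ w, ∑ w', (ε w * ε w' : ℂ) * ξ ^ (e w k - f w' k) := by
    intro k
    rw [map_sum, Finset.sum_mul_sum]
    refine Finset.sum_congr rfl fun w _ => Finset.sum_congr rfl fun w' _ => ?_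
    rw [map_mul, map_intCast, map_zpow₀, ← Complex.inv_eq_conj hξ, sub_eq_add_neg,
      zpow_add₀ hξ0, zpow_neg, inv_zpow]
    ring
  simp_rw [hexpand]
  rw [Finset.sum_comm]
  simp_rw [Finset.sum_comm (γ := κ), ← Finset.mul_sum, h]
  split_ifs with hp
  · simp [hp, ← Int.cast_mul, hε]
  · simp [hp]

theorem sum_zpow_sub_eq_ite_of_separated {l r : ℕ} (hr : 0 < r) {ξ : ℂ}
    (hξ : IsPrimitiveRoot ξ r) {B : (Fin l → ℚ) →ₗ[ℚ] (Fin l → ℚ) →ₗ[ℚ] ℚ} {ρ : Fin l → ℚ}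
    (hρ : ∀ y : Fin l → ℤ, ∃ n : ℤ, (n : ℚ) = B ρ (intVecQ y))
    {P : Matrix (Fin l) (Fin l) ℤ} (hP : P.map (↑) = LinearMap.toMatrix₂' ℚ B)
    (hcop : IsCoprime (r : ℤ) P.det) {W : Subgroup (GL (Fin l) ℤ)}
    (hWρ : ∀ w : W, ∃ z : Fin l → ℤ, glAct (w : GL (Fin l) ℤ) ρ - ρ = intVecQ z)
    {Λ : Finset (Fin l → ℚ)} (hΛ : ∀ μ ∈ Λ, ∃ a : Fin l → ℤ, μ = ρ + intVecQ a)
    (hsep : ∀ lam ∈ Λ, ∀ nu ∈ Λ, ∀ w w' : W,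
      (∃ z : Fin l → ℤ, glAct (w : GL (Fin l) ℤ) lam - glAct (w' : GL (Fin l) ℤ) nu =
        fun i => ((r * z i : ℤ) : ℚ)) → lam = nu ∧ w = w')
    {E : (Fin l → ℚ) → W → (Fin l → Fin r) → ℤ}
    (hE : ∀ μ ∈ Λ, ∀ (w : W) (k : Fin l → Fin r),
      ((E μ w k : ℤ) : ℚ) = B (ρ + finVecQ k) (glAct (w : GL (Fin l) ℤ) μ) - B ρ ρ) :
    ∀ lam ∈ Λ, ∀ nu ∈ Λ, ∀ w w' : W, ∑ k, ξ ^ (E lam w k - E nu w' k) =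
      if lam = nu ∧ w = w' then (r : ℂ) ^ l else 0 := by
  intro lam hlam nu hnu w w'
  split_ifs with hsame
  · obtain ⟨rfl, rfl⟩ := hsame
    simp
  obtain ⟨d, hd⟩ := exists_glAct_sub_glAct_eq_intVecQ (hWρ w) (hWρ w') (hΛ lam hlam) (hΛ nu hnu)
  refine sum_zpow_eq_zero_of_not_dvd hr.ne' hξ hρ hP hcop (d := d) (fun hdvd => hsame ?_) _
    fun k => ?_
  · choose z hz using hdvd
    exact hsep lam hlam nu hnu w w' ⟨z, by rw [hd]; ext i; simp [intVecQ, hz]⟩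
  · push_cast
    rw [hE lam hlam w k, hE nu hnu w' k, ← hd, map_sub]
    ring

theorem stmt11_general (l r : ℕ) (hr : 0 < r)
    (B : (Fin l → ℚ) →ₗ[ℚ] (Fin l → ℚ) →ₗ[ℚ] ℚ)
    (hBint : ∀ x y : Fin l → ℤ, ∃ n : ℤ, (n : ℚ) = B (intVecQ x) (intVecQ y))
    (ρ : Fin l → ℚ)
    (hρ : ∀ y : Fin l → ℤ, ∃ n : ℤ, (n : ℚ) = B ρ (intVecQ y))
    (dP : ℤ)
    (hdP : (dP : ℚ) = (Matrix.of fun i j : Fin l => B (Pi.single i 1) (Pi.single j 1)).det)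
    (hcop : IsCoprime (r : ℤ) dP)
    (ξ : ℂ) (hξ : IsPrimitiveRoot ξ r)
    (W : Subgroup (Matrix.GeneralLinearGroup (Fin l) ℤ)) [Fintype W]
    (hWρ : ∀ w : W, ∃ z : Fin l → ℤ,
      glAct (w : Matrix.GeneralLinearGroup (Fin l) ℤ) ρ - ρ = intVecQ z)
    (Λ : Finset (Fin l → ℚ))
    (hΛ : ∀ μ ∈ Λ, ∃ a : Fin l → ℤ, μ = ρ + intVecQ a)
    (hsep : ∀ lam ∈ Λ, ∀ nu ∈ Λ, ∀ w w' : W,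
      (∃ z : Fin l → ℤ,
          glAct (w : Matrix.GeneralLinearGroup (Fin l) ℤ) lam -
              glAct (w' : Matrix.GeneralLinearGroup (Fin l) ℤ) nu =
            fun i => ((r * z i : ℤ) : ℚ)) →
        lam = nu ∧ w = w')
    (E : (Fin l → ℚ) → W → (Fin l → Fin r) → ℤ)
    (hE : ∀ μ ∈ Λ, ∀ (w : W) (k : Fin l → Fin r),
      ((E μ w k : ℤ) : ℚ) =
        B (ρ + finVecQ k) (glAct (w : Matrix.GeneralLinearGroup (Fin l) ℤ) μ) - B ρ ρ) :
    (∀ lam ∈ Λ, ∀ nu ∈ Λ, lam ≠ nu →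
      ∑ k : Fin l → Fin r,
          (∑ w : W, ((glDet (w : Matrix.GeneralLinearGroup (Fin l) ℤ) : ℤ) : ℂ) *
              ξ ^ (E lam w k)) *
            (starRingEnd ℂ)
              (∑ w : W, ((glDet (w : Matrix.GeneralLinearGroup (Fin l) ℤ) : ℤ) : ℂ) *
                ξ ^ (E nu w k)) = 0) ∧
    (∀ lam ∈ Λ,
      ∑ k : Fin l → Fin r,
          (∑ w : W, ((glDet (w : Matrix.GeneralLinearGroup (Fin l) ℤ) : ℤ) : ℂ) *
              ξ ^ (E lam w k)) *
            (starRingEnd ℂ)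
              (∑ w : W, ((glDet (w : Matrix.GeneralLinearGroup (Fin l) ℤ) : ℤ) : ℂ) *
                ξ ^ (E lam w k)) = (Fintype.card W : ℂ) * (r : ℂ) ^ l) ∧
    (∀ lam ∈ Λ,
      (fun k : Fin l → Fin r =>
        ∑ w : W, ((glDet (w : Matrix.GeneralLinearGroup (Fin l) ℤ) : ℤ) : ℂ) *
          ξ ^ (E lam w k)) ≠ 0) ∧
    LinearIndependent ℂ
      (fun lam : {x // x ∈ Λ} => fun k : Fin l → Fin r =>
        ∑ w : W, ((glDet (w : Matrix.GeneralLinearGroup (Fin l) ℤ) : ℤ) : ℂ) *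
          ξ ^ (E (lam : Fin l → ℚ) w k)) := by
  obtain ⟨P, hP⟩ := exists_map_intCast_eq_toMatrix₂' B hBint
  have hPdet : IsCoprime (r : ℤ) P.det := by
    have hdet : (P.det : ℚ) = dP := by
      rw [hdP]
      calc (P.det : ℚ) = (P.map (↑)).det := RingHom.map_det (Int.castRingHom ℚ) P
        _ = _ := by rw [hP]; rfl
    rwa [← Int.cast_inj.mp hdet] at hcop
  have horth : ∀ lam ∈ Λ, ∀ nu ∈ Λ,
      ∑ k, (∑ w : W, (glDet (w : GL (Fin l) ℤ) : ℂ) * ξ ^ E lam w k) *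
        starRingEnd ℂ (∑ w : W, (glDet (w : GL (Fin l) ℤ) : ℂ) * ξ ^ E nu w k) =
        if lam = nu then (Fintype.card W : ℂ) * (r : ℂ) ^ l else 0 :=
    fun lam hlam nu hnu => sum_mul_conj_sum_signed
      (Complex.norm_eq_one_of_pow_eq_one hξ.pow_eq_one hr.ne') _ (fun w => glDet_mul_self _) _ _
      _ _ (sum_zpow_sub_eq_ite_of_separated hr hξ hρ hP hPdet hWρ hΛ hsep hE lam hlam nu hnu)
  have hindep : LinearIndependent ℂ fun lam : {x // x ∈ Λ} => fun k : Fin l → Fin r =>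
      ∑ w : W, (glDet (w : GL (Fin l) ℤ) : ℂ) * ξ ^ E lam w k :=
    linearIndependent_of_sum_mul_eq_ite (starRingEnd ℂ) _
      (mul_ne_zero (Nat.cast_ne_zero.mpr (Fintype.card_ne_zero (α := W)))
        (pow_ne_zero l (Nat.cast_ne_zero.mpr hr.ne')))
      fun lam nu => by simp only [horth lam lam.2 nu nu.2, Subtype.ext_iff]
  refine ⟨fun lam hlam nu hnu hne => ?_, fun lam hlam => ?_,
    fun lam hlam => hindep.ne_zero ⟨lam, hlam⟩, hindep⟩
  · rw [horth lam hlam nu hnu, if_neg hne]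
  · rw [horth lam hlam lam hlam, if_pos rfl]

/-- if `Λ ⊆ ρ + ℤ^ℓ` is a set on which the `W_r`-orbits are separated
(`w·λ − w'·ν ∈ rℤ^ℓ` forces `λ = ν`, `w = w'`), then the rows
`(S(λ, ρ+k))_k` of the `S`-matrix, `λ ∈ Λ`, are pairwise orthogonal, have squared norm
`|W|·r^ℓ`, are nonzero, and are linearly independent over `ℂ`. -/
theorem stmt11 (l r : ℕ) (hl : 0 < l) (hr : 0 < r)
    (B : (Fin l → ℚ) →ₗ[ℚ] (Fin l → ℚ) →ₗ[ℚ] ℚ)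
    (hBsymm : ∀ x y, B x y = B y x)
    (hBint : ∀ x y : Fin l → ℤ, ∃ n : ℤ, (n : ℚ) = B (intVecQ x) (intVecQ y))
    (hBeven : ∀ y : Fin l → ℤ, ∃ n : ℤ, ((2 * n : ℤ) : ℚ) = B (intVecQ y) (intVecQ y))
    (ρ : Fin l → ℚ)
    (hρ : ∀ y : Fin l → ℤ, ∃ n : ℤ, (n : ℚ) = B ρ (intVecQ y))
    (dP : ℤ)
    (hdP : (dP : ℚ) = (Matrix.of fun i j : Fin l => B (Pi.single i 1) (Pi.single j 1)).det)
    (hdPne : dP ≠ 0) (hcop : IsCoprime (r : ℤ) dP)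
    (ξ : ℂ) (hξ : IsPrimitiveRoot ξ r)
    (W : Subgroup (Matrix.GeneralLinearGroup (Fin l) ℤ)) [Fintype W]
    (hWB : ∀ (w : W) (x y : Fin l → ℚ),
      B (glAct (w : Matrix.GeneralLinearGroup (Fin l) ℤ) x)
        (glAct (w : Matrix.GeneralLinearGroup (Fin l) ℤ) y) = B x y)
    (hWρ : ∀ w : W, ∃ z : Fin l → ℤ,
      glAct (w : Matrix.GeneralLinearGroup (Fin l) ℤ) ρ - ρ = intVecQ z)
    (Λ : Finset (Fin l → ℚ))
    (hΛ : ∀ μ ∈ Λ, ∃ a : Fin l → ℤ, μ = ρ + intVecQ a)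
    (hsep : ∀ lam ∈ Λ, ∀ nu ∈ Λ, ∀ w w' : W,
      (∃ z : Fin l → ℤ,
          glAct (w : Matrix.GeneralLinearGroup (Fin l) ℤ) lam -
              glAct (w' : Matrix.GeneralLinearGroup (Fin l) ℤ) nu =
            fun i => ((r * z i : ℤ) : ℚ)) →
        lam = nu ∧ w = w')
    (E : (Fin l → ℚ) → W → (Fin l → Fin r) → ℤ)
    (hE : ∀ μ ∈ Λ, ∀ (w : W) (k : Fin l → Fin r),
      ((E μ w k : ℤ) : ℚ) =
        B (ρ + finVecQ k) (glAct (w : Matrix.GeneralLinearGroup (Fin l) ℤ) μ) - B ρ ρ) :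
    (∀ lam ∈ Λ, ∀ nu ∈ Λ, lam ≠ nu →
      ∑ k : Fin l → Fin r,
          (∑ w : W, ((glDet (w : Matrix.GeneralLinearGroup (Fin l) ℤ) : ℤ) : ℂ) *
              ξ ^ (E lam w k)) *
            (starRingEnd ℂ)
              (∑ w : W, ((glDet (w : Matrix.GeneralLinearGroup (Fin l) ℤ) : ℤ) : ℂ) *
                ξ ^ (E nu w k)) = 0) ∧
    (∀ lam ∈ Λ,
      ∑ k : Fin l → Fin r,
          (∑ w : W, ((glDet (w : Matrix.GeneralLinearGroup (Fin l) ℤ) : ℤ) : ℂ) *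
              ξ ^ (E lam w k)) *
            (starRingEnd ℂ)
              (∑ w : W, ((glDet (w : Matrix.GeneralLinearGroup (Fin l) ℤ) : ℤ) : ℂ) *
                ξ ^ (E lam w k)) = (Fintype.card W : ℂ) * (r : ℂ) ^ l) ∧
    (∀ lam ∈ Λ,
      (fun k : Fin l → Fin r =>
        ∑ w : W, ((glDet (w : Matrix.GeneralLinearGroup (Fin l) ℤ) : ℤ) : ℂ) *
          ξ ^ (E lam w k)) ≠ 0) ∧
    LinearIndependent ℂ
      (fun lam : {x // x ∈ Λ} => fun k : Fin l → Fin r =>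
        ∑ w : W, ((glDet (w : Matrix.GeneralLinearGroup (Fin l) ℤ) : ℤ) : ℂ) *
          ξ ^ (E (lam : Fin l → ℚ) w k)) :=
  stmt11_general l r hr B hBint ρ hρ dP hdP hcop ξ hξ W hWρ Λ hΛ hsep E hE
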